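/- arXiv:2403.20161 — 9 statements merged into one kernel-verified Lean document; each statement's English description precedes it below -/
import Mathlib

section
/- For every resource contribution game G, the set of contentious profiles equals the union over all players of the profiles contentious for that player: cont-prof(G) = ⋃_{i∈N} cont-prof(G,i). -/
open scoped Classical

/-- A resource contribution game over atomic resource type `Res` with player set `ι`:
each player has a goal (a resource bundle, i.e. a multiset of atomic resources) and
an endowment (a resource bag, i.e. a multiset of resource bundles). -/
structure RCG (Res ι : Type*) where
  goal : ι → Multiset Res
  endow : ι → Multiset (Multiset Res)

namespace RCG

variable {Res ι : Type*} [Fintype ι]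

/-- A profile assigns to each player a bag (his contribution). -/
abbrev Profile (Res ι : Type*) := ι → Multiset (Multiset Res)

/-- Outcome of a profile: the multiset sum of all contributions. -/
def out (P : Profile Res ι) : Multiset (Multiset Res) := ∑ i, P i

/-- The bag `X` can be transformed into the bundle `B`: `♭(B) ⊆ ♭•(X)`. -/
def Trans (X : Multiset (Multiset Res)) (B : Multiset Res) : Prop := B ≤ X.sum

/-- Player `i` is potentially satisfied by profile `P`. -/
def Psat (G : RCG Res ι) (P : Profile Res ι) (i : ι) : Prop :=
  Trans (out P) (G.goal i)

/-- The set of players potentially satisfied by `P`. -/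
noncomputable def psatPlayers (G : RCG Res ι) (P : Profile Res ι) : Finset ι :=
  Finset.univ.filter fun i => Psat G P i

/-- The profile `P` is contentious. -/
def Contentious (G : RCG Res ι) (P : Profile Res ι) : Prop :=
  ¬ Trans (out P) (∑ j ∈ psatPlayers G P, G.goal j)

/-- Restriction of bundle `B` to the resource types occurring in `C`. -/
noncomputable def restr (B C : Multiset Res) : Multiset Res := B.filter (· ∈ C)

/-- The profile `P` is contentious for player `i`. -/
def ContentiousFor (G : RCG Res ι) (P : Profile Res ι) (i : ι) : Prop :=
  Psat G P i ∧ ¬ Trans (out P) (∑ j ∈ psatPlayers G P, restr (G.goal j) (G.goal i))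

/-- The three kinds of preferences: contention-tolerant, (public) contention-averse,
private contention-averse. -/
inductive Pref | ct | ca | pca

/-- `P` is a good profile for player `i` according to preference kind `pref`. -/
def Good (pref : Pref) (G : RCG Res ι) (P : Profile Res ι) (i : ι) : Prop :=
  match pref with
  | .ct => Psat G P i
  | .ca => Psat G P i ∧ ¬ Contentious G P
  | .pca => Psat G P i ∧ ¬ ContentiousFor G P i

/-- Player `i` strictly prefers `P` over `Q` (i.e. `Q ≺^pref_i P`). -/
def Prefers (pref : Pref) (G : RCG Res ι) (i : ι) (Q P : Profile Res ι) : Prop :=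
  (¬ Good pref G P i ∧ ¬ Good pref G Q i ∧ P i < Q i) ∨
  (Good pref G P i ∧ ¬ Good pref G Q i) ∨
  (Good pref G P i ∧ Good pref G Q i ∧ P i < Q i)

/-- `C` is a profitable deviation for player `i` from profile `P`. -/
noncomputable def ProfDev (pref : Pref) (G : RCG Res ι) (P : Profile Res ι) (i : ι)
    (C : Multiset (Multiset Res)) : Prop :=
  C ≤ G.endow i ∧ Prefers pref G i P (Function.update P i C)

/-- `P` is a pure Nash equilibrium of `G` according to `pref`:
`P` is a profile of `G` and no player has a profitable deviation. -/
noncomputable def NE (pref : Pref) (G : RCG Res ι) (P : Profile Res ι) : Prop :=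
  (∀ i, P i ≤ G.endow i) ∧ ∀ i C, ¬ ProfDev pref G P i C

/-- `G` is an RCG with endowments as bags of atomic resources. -/
def IsRCGBAR (G : RCG Res ι) : Prop :=
  ∀ i, ∀ B ∈ G.endow i, ∃ r : Res, B = {r}

/-- `G` has independent objectives. -/
def IndepObjectives (G : RCG Res ι) : Prop :=
  ∀ i j : ι, i ≠ j → ∀ r : Res, r ∈ G.goal i → r ∉ G.goal j

end RCG

/-!
A profile is contentious exactly when some resource type `r` is demanded by the potentially
satisfied players more often than the outcome supplies it. Restricting every goal to the
resource types of a player whose goal contains `r` does not change the demand for `r`, so that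
player witnesses the contention; conversely, restricting goals only lowers the demand.
-/

theorem Multiset.filter_finset_sum {α ι : Type*} (p : α → Prop) [DecidablePred p]
    (s : Finset ι) (f : ι → Multiset α) :
    (∑ j ∈ s, f j).filter p = ∑ j ∈ s, (f j).filter p :=
  map_sum (⟨⟨Multiset.filter p, Multiset.filter_zero p⟩, Multiset.filter_add p⟩ :
    Multiset α →+ Multiset α) f s

theorem Multiset.le_of_forall_mem_exists_filter_le {α : Type*} [DecidableEq α]
    {A X : Multiset α} (h : ∀ r ∈ A, ∃ C : Multiset α, r ∈ C ∧ A.filter (· ∈ C) ≤ X) :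
    A ≤ X := by
  rw [Multiset.le_iff_count]
  intro r
  by_cases hr : r ∈ A
  · obtain ⟨C, hrC, hle⟩ := h r hr
    calc A.count r = (A.filter (· ∈ C)).count r := (Multiset.count_filter_of_pos hrC).symm
      _ ≤ X.count r := Multiset.count_le_of_le r hle
  · simp [Multiset.count_eq_zero_of_notMem hr]

namespace RCG

variable {Res ι : Type*} {G : RCG Res ι}

theorem sum_restr (s : Finset ι) (C : Multiset Res) :
    ∑ j ∈ s, restr (G.goal j) C = (∑ j ∈ s, G.goal j).filter (· ∈ C) :=
  (Multiset.filter_finset_sum _ s G.goal).symm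

variable [Fintype ι] {P : Profile Res ι}

theorem ContentiousFor.contentious {i : ι} (h : ContentiousFor G P i) : Contentious G P :=
  fun hall => h.2 <| le_trans (Finset.sum_le_sum fun _ _ => Multiset.filter_le _ _) hall

theorem Contentious.exists_contentiousFor (h : Contentious G P) :
    ∃ i, ContentiousFor G P i := by
  by_contra! hnone
  refine h (Multiset.le_of_forall_mem_exists_filter_le fun r hr => ?_)
  obtain ⟨i, hi, hri⟩ := Multiset.mem_sum.mp hr
  have hpsat : Psat G P i := (Finset.mem_filter.mp hi).2
  refine ⟨G.goal i, hri, ?_⟩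
  rw [← sum_restr]
  exact not_not.mp fun hfails => hnone i ⟨hpsat, hfails⟩

end RCG

theorem contentious_iff_exists_contentiousFor_general {Res ι : Type*} [Fintype ι]
    (G : RCG Res ι) (P : RCG.Profile Res ι) :
    RCG.Contentious G P ↔ ∃ i : ι, RCG.ContentiousFor G P i :=
  ⟨RCG.Contentious.exists_contentiousFor, fun ⟨_, h⟩ => h.contentious⟩

/-- a profile of `G` is contentious iff it is contentious for some player. -/
theorem contentious_iff_exists_contentiousFor {Res ι : Type*} [Fintype ι]
    (G : RCG Res ι) (P : RCG.Profile Res ι) (hP : ∀ i, P i ≤ G.endow i) :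
    RCG.Contentious G P ↔ ∃ i : ι, RCG.ContentiousFor G P i :=
  contentious_iff_exists_contentiousFor_general G P
end

section
/- For every resource contribution game G, profile P and player i, if P is contentious for player i (P ∈ cont-prof(G,i)), then there exists a player j ≠ i such that P is contentious for player j (P ∈ cont-prof(G,j)). -/
open scoped Classical

/-! A contentious player `i` is short of some resource `r` of its own goal once every potentially
satisfied player's demand for `r` is counted. Since the demand of `i` alone is covered, some other potentially
satisfied player `j` must demand `r` too; as `r` also occurs in `j`'s goal, the same shortage of
`r` makes `P` contentious for `j`. -/

namespace RCG

variable {Res ι : Type*}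

theorem count_sum_restr {s : Finset ι} (f : ι → Multiset Res) (C : Multiset Res) (r : Res) :
    (∑ j ∈ s, restr (f j) C).count r = if r ∈ C then ∑ j ∈ s, (f j).count r else 0 := by
  rw [Multiset.count_sum']
  split_ifs with hr <;> simp [restr, hr]

variable [Fintype ι]

theorem contentiousFor_iff {G : RCG Res ι} {P : Profile Res ι} {i : ι} :
    ContentiousFor G P i ↔ Psat G P i ∧
      ∃ r ∈ G.goal i, (out P).sum.count r < ∑ j ∈ psatPlayers G P, (G.goal j).count r := by
  simp only [ContentiousFor, Trans, Multiset.le_iff_count, count_sum_restr, not_forall, not_le]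
  refine and_congr_right fun _ => ⟨fun ⟨r, hr⟩ => ?_, fun ⟨r, hri, hr⟩ => ⟨r, by simpa [hri]⟩⟩
  by_cases hri : r ∈ G.goal i
  · exact ⟨r, hri, by simpa [hri] using hr⟩
  · simp [hri] at hr

theorem mem_psatPlayers {G : RCG Res ι} {P : Profile Res ι} {i : ι} :
    i ∈ psatPlayers G P ↔ Psat G P i := by
  simp [psatPlayers]

end RCG

theorem Finset.exists_ne_ne_zero_of_le_of_lt_sum {ι M : Type*} [AddCommMonoid M] [Preorder M]
    {s : Finset ι} {f : ι → M} {i : ι} {a : M} (hi : i ∈ s) (hle : f i ≤ a) (hlt : a < ∑ j ∈ s, f j) :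
    ∃ j ∈ s, j ≠ i ∧ f j ≠ 0 := by
  by_contra! h
  rw [Finset.sum_eq_single_of_mem i hi h] at hlt
  exact lt_irrefl _ (hle.trans_lt hlt)

theorem contentiousFor_exists_other_general {Res ι : Type*} [Fintype ι]
    (G : RCG Res ι) (P : RCG.Profile Res ι) (i : ι)
    (h : RCG.ContentiousFor G P i) :
    ∃ j : ι, j ≠ i ∧ RCG.ContentiousFor G P j := by
  obtain ⟨hi, r, hri, hshort⟩ := RCG.contentiousFor_iff.mp h
  obtain ⟨j, hj, hji, hrj⟩ := Finset.exists_ne_ne_zero_of_le_of_lt_sum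
    (RCG.mem_psatPlayers.mpr hi) (Multiset.le_iff_count.mp hi r) hshort
  exact ⟨j, hji, RCG.contentiousFor_iff.mpr
    ⟨RCG.mem_psatPlayers.mp hj, r, Multiset.count_ne_zero.mp hrj, hshort⟩⟩

/-- if `P` is contentious for player `i`, then it is contentious for some
other player `j ≠ i`. -/
theorem contentiousFor_exists_other {Res ι : Type*} [Fintype ι]
    (G : RCG Res ι) (P : RCG.Profile Res ι) (hP : ∀ k, P k ≤ G.endow k) (i : ι)
    (h : RCG.ContentiousFor G P i) :
    ∃ j : ι, j ≠ i ∧ RCG.ContentiousFor G P j :=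
  contentiousFor_exists_other_general G P i h
end

section
/- For every resource contribution game G and player i, the sets of good profiles are nested: good^ca(G,i) ⊆ good^pca(G,i) ⊆ good^ct(G,i). -/
open scoped Classical

/-- `good^ca(G,i) ⊆ good^pca(G,i) ⊆ good^ct(G,i)`. -/
theorem good_ca_subset_pca_subset_ct {Res ι : Type*} [Fintype ι]
    (G : RCG Res ι) (i : ι) (P : RCG.Profile Res ι) (hP : ∀ k, P k ≤ G.endow k) :
    (RCG.Good .ca G P i → RCG.Good .pca G P i) ∧
    (RCG.Good .pca G P i → RCG.Good .ct G P i) := by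
  constructor
  · rintro ⟨hpsat, hnc⟩
    refine ⟨hpsat, fun hcf => hnc ?_⟩
    intro htrans
    exact hcf.2 <| le_trans
      (Finset.sum_le_sum fun j _ => Multiset.filter_le _ _) htrans
  · rintro ⟨hpsat, _⟩
    exact hpsat
end

section
/- There exists a resource contribution game G such that NE^pref(G) = ∅ for every kind of preferences pref ∈ {ct, ca, pca}. Concretely, for distinct atomic resources A and B, the two-player RCG with endowments ε_1 = ε_2 = {A·B} and goals γ_1 = A, γ_2 = B·B admits no pure Nash equilibrium for any of the three kinds of preferences. -/
open scoped Classical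

/-!
Write `E = {A, B}`. Each player either keeps `E` or contributes it, so the flattened outcome is
`0`, `E` or `E + E`. On `E` only the player with goal `A` is satisfied; on `E + E` both are and
the outcome covers both goals, so no one is contentious; on `0` no one is satisfied. Hence in each
of the four profiles someone gains: from `(0, 0)` the `A`-player by contributing, from `(0, E)`
the (unsatisfiable) `B·B`-player by withdrawing, from `(E, 0)` the `B·B`-player by contributing,
and from `(E, E)` the `A`-player, who stays satisfied, by withdrawing.
-/

namespace RCG

section

variable {Res ι : Type*} [Fintype ι] {pref : Pref} {G : RCG Res ι} {P Q : Profile Res ι}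
  {i : ι}

theorem Good.psat (h : Good pref G P i) : Psat G P i := by
  cases pref
  · exact h
  · exact h.1
  · exact h.1

theorem not_contentiousFor_of_not_contentious (h : ¬Contentious G P) :
    ¬ContentiousFor G P i := fun hi =>
  hi.2 <| le_trans (Finset.sum_le_sum fun _ _ => Multiset.filter_le _ _) (not_not.mp h)

theorem good_of_psat_of_not_contentious (hi : Psat G P i) (h : ¬Contentious G P) :
    Good pref G P i := by
  cases pref
  · exact hi
  · exact ⟨hi, h⟩
  · exact ⟨hi, not_contentiousFor_of_not_contentious h⟩

theorem not_contentious_of_card_psatPlayers_le_one (h : (psatPlayers G P).card ≤ 1) :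
    ¬Contentious G P := by
  rcases (psatPlayers G P).eq_empty_or_nonempty with hempty | ⟨j, hj⟩
  · simp [Contentious, Trans, hempty]
  · have hsingle : psatPlayers G P = {j} :=
      Finset.eq_singleton_iff_unique_mem.mpr ⟨hj, fun k hk => Finset.card_le_one.mp h k hk j hj⟩
    rw [Contentious, hsingle, Finset.sum_singleton, not_not]
    exact (Finset.mem_filter.mp hj).2

theorem good_of_sum_goal_le (h : ∑ j, G.goal j ≤ (out P).sum) : Good pref G P i := by
  refine good_of_psat_of_not_contentious ?_ ?_
  · exact le_trans (Finset.single_le_sum (fun _ _ => Multiset.zero_le _) (Finset.mem_univ i)) h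
  · exact not_not.mpr <|
      le_trans (Finset.sum_le_sum_of_subset (Finset.subset_univ (psatPlayers G P))) h

theorem prefers_of_good_of_not_good (hP : Good pref G P i) (hQ : ¬Good pref G Q i) :
    Prefers pref G i Q P :=
  Or.inr (Or.inl ⟨hP, hQ⟩)

theorem prefers_of_lt_of_good_iff (hlt : P i < Q i) (h : Good pref G P i ↔ Good pref G Q i) :
    Prefers pref G i Q P := by
  by_cases hP : Good pref G P i
  · exact Or.inr (Or.inr ⟨hP, h.mp hP, hlt⟩)
  · exact Or.inl ⟨hP, mt h.mpr hP, hlt⟩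

theorem NE.not_prefers_update (h : NE pref G P) {C : Multiset (Multiset Res)}
    (hC : C ≤ G.endow i) : ¬Prefers pref G i P (Function.update P i C) :=
  fun hpref => h.2 i C ⟨hC, hpref⟩

end

variable {Res : Type*}

theorem out_sum_fin_two (P : Profile Res (Fin 2)) :
    (out P).sum = (P 0).sum + (P 1).sum := by
  rw [out, Fin.sum_univ_two, Multiset.sum_add]

def noEquilibriumGame (A B : Res) : RCG Res (Fin 2) where
  goal := ![{A}, {B, B}]
  endow := ![{{A, B}}, {{A, B}}]

namespace noEquilibriumGame

variable {A B : Res} {pref : Pref} {P : Profile Res (Fin 2)} {i : Fin 2}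

theorem choice_eq (h : P i ≤ (noEquilibriumGame A B).endow i) :
    P i = 0 ∨ P i = {{A, B}} := by
  fin_cases i <;> exact Multiset.le_singleton.mp h

theorem not_good_of_out_sum_eq_zero (h : (out P).sum = 0) :
    ¬Good pref (noEquilibriumGame A B) P i := fun hi => by
  have := hi.psat
  fin_cases i <;> simp_all [Psat, Trans, noEquilibriumGame]

theorem not_psat_one_of_out_sum_eq_pair (hAB : A ≠ B) (h : (out P).sum = {A, B}) :
    ¬Psat (noEquilibriumGame A B) P 1 := fun h1 => by
  have := Multiset.count_le_of_le B h1
  simp [noEquilibriumGame, h, hAB] at this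

theorem good_zero_of_out_sum_eq_pair (hAB : A ≠ B) (h : (out P).sum = {A, B}) :
    Good pref (noEquilibriumGame A B) P 0 := by
  have h0 : Psat (noEquilibriumGame A B) P 0 := by
    simp [Psat, Trans, noEquilibriumGame, h]
  refine good_of_psat_of_not_contentious h0 (not_contentious_of_card_psatPlayers_le_one ?_)
  have hsat : ∀ j ∈ psatPlayers (noEquilibriumGame A B) P, j = 0 := fun j hj => by
    fin_cases j
    · rfl
    · exact absurd (Finset.mem_filter.mp hj).2 (not_psat_one_of_out_sum_eq_pair hAB h)
  exact Finset.card_le_one.mpr fun j hj k hk => (hsat j hj).trans (hsat k hk).symm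

theorem good_of_out_sum_eq_two_pairs (h : (out P).sum = {A, B} + {A, B}) :
    Good pref (noEquilibriumGame A B) P i := by
  refine good_of_sum_goal_le ?_
  rw [Fin.sum_univ_two, h]
  calc ({A} : Multiset Res) + {B, B} = {A, B} + {B} := by
        simp only [Multiset.insert_eq_cons, Multiset.singleton_add, Multiset.cons_add,
          Multiset.add_cons, Multiset.cons_swap]
    _ ≤ {A, B} + {A, B} := by gcongr; simp

end noEquilibriumGame

end RCG

open RCG noEquilibriumGame in
/-- the two-player game with `ε₁ = ε₂ = {A·B}`, `γ₁ = A`, `γ₂ = B·B`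
admits no pure Nash equilibrium for any kind of preferences. -/
theorem exists_game_no_NE {Res : Type*} (A B : Res) (hAB : A ≠ B)
    (G : RCG Res (Fin 2))
    (hgoal : G.goal = ![({A} : Multiset Res), ({B, B} : Multiset Res)])
    (hendow : G.endow = ![({({A, B} : Multiset Res)} : Multiset (Multiset Res)),
                          ({({A, B} : Multiset Res)} : Multiset (Multiset Res))]) :
    ∀ pref : RCG.Pref, ∀ P : RCG.Profile Res (Fin 2), ¬ RCG.NE pref G P := by
  obtain rfl : G = noEquilibriumGame A B := by
    obtain ⟨goal, endow⟩ := G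
    dsimp only at hgoal hendow
    subst hgoal hendow
    rfl
  intro pref P hNE
  rcases choice_eq (hNE.1 0) with h0 | h0 <;> rcases choice_eq (hNE.1 1) with h1 | h1
  · refine hNE.not_prefers_update (i := 0) (C := {{A, B}}) le_rfl
      (prefers_of_good_of_not_good ?_ ?_)
    · exact good_zero_of_out_sum_eq_pair hAB (by simp [out_sum_fin_two, h1])
    · exact not_good_of_out_sum_eq_zero (by simp [out_sum_fin_two, h0, h1])
  · refine hNE.not_prefers_update (i := 1) (Multiset.zero_le _)
      (prefers_of_lt_of_good_iff ?_ ?_)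
    · simp [h1]
    · refine iff_of_false (fun h => ?_) (fun h => ?_)
      · exact not_good_of_out_sum_eq_zero (by simp [out_sum_fin_two, h0]) h
      · exact not_psat_one_of_out_sum_eq_pair hAB (by simp [out_sum_fin_two, h0, h1]) h.psat
  · refine hNE.not_prefers_update (i := 1) (C := {{A, B}}) le_rfl
      (prefers_of_good_of_not_good ?_ ?_)
    · exact good_of_out_sum_eq_two_pairs (by simp [out_sum_fin_two, h0])
    · exact fun h =>
        not_psat_one_of_out_sum_eq_pair hAB (by simp [out_sum_fin_two, h0, h1]) h.psat
  · refine hNE.not_prefers_update (i := 0) (Multiset.zero_le _)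
      (prefers_of_lt_of_good_iff ?_ ?_)
    · simp [h0]
    · refine iff_of_true ?_ ?_
      · exact good_zero_of_out_sum_eq_pair hAB (by simp [out_sum_fin_two, h1])
      · exact good_of_out_sum_eq_two_pairs (by simp [out_sum_fin_two, h0, h1])
end

section
/- Let G = (N, γ_1,…,γ_n, ε_1,…,ε_n) be a resource contribution game. A profile P is not a Nash equilibrium under contention-tolerant preferences (P ∉ NE^ct(G)) if and only if there exists a player i ∈ N such that either: (1) P ∉ psat-prof(G,i) and P_i ≠ ∅; or (2) P ∉ psat-prof(G,i) and (P_{-i}, ε_i) ∈ psat-prof(G,i); or (3) P ∈ psat-prof(G,i) and there exists a bundle A ∈ P_i such that (P_{-i}, P_i ∖ {A}) ∈ psat-prof(G,i). -/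
open scoped Classical

/-! Under contention-tolerant preferences, satisfaction by `(P_{-i}, C)` is monotone in `C`,
and between equally good profiles a player prefers the strictly smaller contribution. Hence a
profitable deviation exists iff one of three canonical ones is profitable: contributing nothing,
contributing the whole endowment, or withdrawing a single bundle of `P_i`. -/

namespace Multiset

theorem exists_mem_le_erase_of_lt {α : Type*} [DecidableEq α] {s t : Multiset α} (h : s < t) :
    ∃ a ∈ t, s ≤ t.erase a := by
  obtain ⟨a, hle⟩ := lt_iff_cons_le.mp h
  refine ⟨a, mem_of_le hle (mem_cons_self a s), ?_⟩
  simpa using erase_le_erase a hle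

theorem sum_le_sum_of_le {α : Type*} [AddCommMonoid α] [PartialOrder α] [CanonicallyOrderedAdd α]
    {s t : Multiset α} (h : s ≤ t) : s.sum ≤ t.sum := by
  obtain ⟨u, rfl⟩ := le_iff_exists_add.mp h
  simp [sum_add]

end Multiset

namespace RCG

variable {Res ι : Type*}

theorem Trans.mono {X Y : Multiset (Multiset Res)} {B : Multiset Res} (hXY : X ≤ Y)
    (h : Trans X B) : Trans Y B :=
  h.trans (Multiset.sum_le_sum_of_le hXY)

variable [Fintype ι]

theorem out_mono : Monotone (out : Profile Res ι → Multiset (Multiset Res)) :=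
  Fintype.sum_mono

theorem psat_update_mono (G : RCG Res ι) (P : Profile Res ι) (i : ι)
    {C C' : Multiset (Multiset Res)} (h : C ≤ C') (hC : Psat G (Function.update P i C) i) :
    Psat G (Function.update P i C') i :=
  Trans.mono (out_mono (Function.update_mono h)) hC

theorem not_NE_iff_exists_profDev (pref : Pref) (G : RCG Res ι) (P : Profile Res ι)
    (hP : ∀ i, P i ≤ G.endow i) : ¬ NE pref G P ↔ ∃ i C, ProfDev pref G P i C := by
  simp [NE, hP]

theorem profDev_ct_iff (G : RCG Res ι) (P : Profile Res ι) (i : ι)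
    (C : Multiset (Multiset Res)) :
    ProfDev .ct G P i C ↔ C ≤ G.endow i ∧
      ((¬ Psat G (Function.update P i C) i ∧ ¬ Psat G P i ∧ C < P i) ∨
        (Psat G (Function.update P i C) i ∧ ¬ Psat G P i) ∨
        (Psat G (Function.update P i C) i ∧ Psat G P i ∧ C < P i)) := by
  simp only [ProfDev, Prefers, Good, Function.update_self]

theorem exists_profDev_ct_iff (G : RCG Res ι) (P : Profile Res ι) (i : ι)
    (hP : P i ≤ G.endow i) :
    (∃ C, ProfDev .ct G P i C) ↔
      (¬ Psat G P i ∧ P i ≠ 0) ∨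
        (¬ Psat G P i ∧ Psat G (Function.update P i (G.endow i)) i) ∨
        (Psat G P i ∧ ∃ A ∈ P i, Psat G (Function.update P i ((P i).erase A)) i) := by
  simp only [profDev_ct_iff]
  constructor
  · rintro ⟨C, hC, ⟨-, hP_unsat, hlt⟩ | ⟨hC_sat, hP_unsat⟩ | ⟨hC_sat, hP_sat, hlt⟩⟩
    · exact Or.inl ⟨hP_unsat, ((Multiset.zero_le C).trans_lt hlt).ne'⟩
    · exact Or.inr (Or.inl ⟨hP_unsat, psat_update_mono G P i hC hC_sat⟩)
    · obtain ⟨A, hA, hle⟩ := Multiset.exists_mem_le_erase_of_lt hlt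
      exact Or.inr (Or.inr ⟨hP_sat, A, hA, psat_update_mono G P i hle hC_sat⟩)
  · rintro (⟨hP_unsat, hne⟩ | ⟨hP_unsat, hE_sat⟩ | ⟨hP_sat, A, hA, hA_sat⟩)
    · refine ⟨0, Multiset.zero_le _, ?_⟩
      by_cases h0 : Psat G (Function.update P i 0) i
      · exact Or.inr (Or.inl ⟨h0, hP_unsat⟩)
      · exact Or.inl ⟨h0, hP_unsat, pos_iff_ne_zero.mpr hne⟩
    · exact ⟨G.endow i, le_rfl, Or.inr (Or.inl ⟨hE_sat, hP_unsat⟩)⟩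
    · exact ⟨(P i).erase A, (Multiset.erase_le A (P i)).trans hP,
        Or.inr (Or.inr ⟨hA_sat, hP_sat, Multiset.erase_lt.mpr hA⟩)⟩

end RCG

/-- characterization of profiles that are not Nash equilibria under
contention-tolerant preferences. -/
theorem not_NE_ct_iff {Res ι : Type*} [Fintype ι]
    (G : RCG Res ι) (P : RCG.Profile Res ι) (hP : ∀ i, P i ≤ G.endow i) :
    ¬ RCG.NE .ct G P ↔
      ∃ i : ι,
        (¬ RCG.Psat G P i ∧ P i ≠ 0) ∨
        (¬ RCG.Psat G P i ∧ RCG.Psat G (Function.update P i (G.endow i)) i) ∨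
        (RCG.Psat G P i ∧ ∃ A ∈ P i,
          RCG.Psat G (Function.update P i ((P i).erase A)) i) := by
  rw [RCG.not_NE_iff_exists_profDev .ct G P hP]
  exact exists_congr fun i => RCG.exists_profDev_ct_iff G P i (hP i)
end

section
/- If G is a resource contribution game with independent objectives, then there is no contentious profile in G: cont-prof(G) = ∅. -/
open scoped Classical

/-! For independent objectives the goals have pairwise disjoint supports, so their multiset sum
is their union; the union of the goals of the potentially satisfied players lies below the
flattened outcome because each of these goals does. -/

theorem Multiset.finsetSum_le_of_pairwise_disjoint {α β : Type*} {s : Finset β}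
    {f : β → Multiset α} {M : Multiset α}
    (hdisj : ∀ x ∈ s, ∀ y ∈ s, x ≠ y → Disjoint (f x) (f y)) (hle : ∀ x ∈ s, f x ≤ M) :
    s.sum f ≤ M := by
  rw [Multiset.finsetSum_eq_sup_iff_disjoint.mpr hdisj]
  exact Finset.sup_le hle

namespace RCG

theorem IndepObjectives.disjoint_goal {Res ι : Type*} {G : RCG Res ι}
    (hind : G.IndepObjectives) {i j : ι} (hij : i ≠ j) : Disjoint (G.goal i) (G.goal j) :=
  Multiset.disjoint_left.mpr (hind i j hij _)

theorem psat_of_mem_psatPlayers {Res ι : Type*} [Fintype ι] {G : RCG Res ι}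
    {P : Profile Res ι} {i : ι} (hi : i ∈ psatPlayers G P) : Psat G P i :=
  (Finset.mem_filter.mp hi).2

end RCG

/-- a game with independent objectives has no contentious profile. -/
theorem indep_no_contentious {Res ι : Type*} [Fintype ι]
    (G : RCG Res ι) (hind : RCG.IndepObjectives G) :
    ∀ P : RCG.Profile Res ι, (∀ i, P i ≤ G.endow i) → ¬ RCG.Contentious G P := by
  intro P _ hcont
  exact hcont <| Multiset.finsetSum_le_of_pairwise_disjoint
    (fun _ _ _ _ hij => hind.disjoint_goal hij) fun _ hj => RCG.psat_of_mem_psatPlayers hj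
end

section
/- For every RCGBAR G (resource contribution game with endowments as bags of atomic resources), the set NE^ca(G) of pure Nash equilibria under public contention-averse preferences is non-empty. -/
open scoped Classical

/-!
An equilibrium is built greedily. Call a coalition `S` closed if every player with a nonempty
goal contained in the combined goals of `S` belongs to `S`. Starting from the empty coalition,
whenever some player `i` outside `S` could satisfy his goal without contention by contributing
part of his endowment, replace `S` by the closure of `S ∪ {i}` and let `i` contribute exactly
the goals that are new in it. Along the way the outcome is exactly the combined goals of `S`, so
it is non-contentious and satisfies exactly the players of `S`. Take a maximal such coalition.
An unsatisfied player contributes nothing and, by maximality, cannot get satisfied. A contributor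
cannot give less: `S` is the closure of him together with the players whose goals the others pay
for, so a non-contentious outcome that still satisfies him satisfies all of `S`, which costs at
least what he pays. Since endowments are atomic, giving fewer bundles means giving fewer atoms.
-/

open Finset

namespace Multiset

variable {α : Type*}

theorem eq_map_singleton_sum_of_forall_eq_singleton {X : Multiset (Multiset α)}
    (h : ∀ B ∈ X, ∃ r, B = {r}) : X = X.sum.map ({·}) := by
  induction X using Multiset.induction_on with
  | empty => simp
  | cons B X ih =>
    obtain ⟨r, rfl⟩ := h B (mem_cons_self B X)
    rw [sum_cons, singleton_add, map_cons, ← ih fun B hB => h B (mem_cons_of_mem hB)]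

theorem card_sum_of_forall_eq_singleton {X : Multiset (Multiset α)}
    (h : ∀ B ∈ X, ∃ r, B = {r}) : card X.sum = card X := by
  conv_rhs => rw [eq_map_singleton_sum_of_forall_eq_singleton h, card_map]

end Multiset

namespace RCG

variable {Res ι : Type*} [Fintype ι]

section Closure

variable (g : ι → Multiset Res)

def IsGoalClosed (T : Finset ι) : Prop :=
  ∀ m, g m ≤ ∑ k ∈ T, g k → g m ≠ 0 → m ∈ T

noncomputable def goalClosure (X : Finset ι) : Finset ι :=
  univ.filter fun m => ∀ T, IsGoalClosed g T → X ⊆ T → m ∈ T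

variable {g}

theorem subset_goalClosure (X : Finset ι) : X ⊆ goalClosure g X :=
  fun _ hm => mem_filter.mpr ⟨mem_univ _, fun _ _ hXT => hXT hm⟩

theorem goalClosure_subset {X T : Finset ι} (hT : IsGoalClosed g T) (hXT : X ⊆ T) :
    goalClosure g X ⊆ T :=
  fun _ hm => (mem_filter.mp hm).2 T hT hXT

theorem isGoalClosed_goalClosure (X : Finset ι) : IsGoalClosed g (goalClosure g X) :=
  fun m hm hgm => mem_filter.mpr ⟨mem_univ _, fun _ hT hXT =>
    hT m (hm.trans (sum_le_sum_of_subset (goalClosure_subset hT hXT))) hgm⟩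

theorem goalClosure_mono {X Y : Finset ι} (h : X ⊆ Y) : goalClosure g X ⊆ goalClosure g Y :=
  goalClosure_subset (isGoalClosed_goalClosure Y) (h.trans (subset_goalClosure Y))

variable (g) in
noncomputable def satisfied (O : Multiset Res) : Finset ι :=
  univ.filter fun m => g m ≤ O

theorem mem_satisfied {O : Multiset Res} {m : ι} : m ∈ satisfied g O ↔ g m ≤ O := by
  simp [satisfied]

theorem isGoalClosed_satisfied {O : Multiset Res} (h : ∑ m ∈ satisfied g O, g m ≤ O) :
    IsGoalClosed g (satisfied g O) :=
  fun _ hm _ => mem_satisfied.mpr (hm.trans h)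

theorem IsGoalClosed.sum_satisfied_le {S : Finset ι} (hS : IsGoalClosed g S) :
    ∑ m ∈ satisfied g (∑ k ∈ S, g k), g m ≤ ∑ k ∈ S, g k :=
  sum_le_sum_of_ne_zero fun m hm hgm => hS m (mem_satisfied.mp hm) hgm

end Closure

/-- `S` is the coalition satisfied by the contributions `c`. The field `exists_block` is what
prevents a contributor from paying less while keeping the outcome non-contentious. -/
structure FundsCoalition (g e c : ι → Multiset Res) (S : Finset ι) : Prop where
  isGoalClosed : IsGoalClosed g S
  le_endow : ∀ k, c k ≤ e k
  sum_eq : ∑ k, c k = ∑ m ∈ S, g m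
  exists_block : ∀ i, c i ≠ 0 → ∃ V ⊆ S, i ∈ V ∧ c i = ∑ m ∈ V, g m ∧
    S ⊆ goalClosure g (insert i (S \ V))

namespace FundsCoalition

variable {g e c : ι → Multiset Res} {S : Finset ι}

theorem empty : FundsCoalition g e 0 ∅ where
  isGoalClosed _ hm hgm := absurd (nonpos_iff_eq_zero.mp hm) hgm
  le_endow _ := zero_le
  sum_eq := by simp
  exists_block _ hi := absurd rfl hi

theorem eq_zero_of_notMem (hF : FundsCoalition g e c S) {i : ι} (hi : i ∉ S) : c i = 0 := by
  by_contra hci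
  obtain ⟨V, hVS, hiV, -⟩ := hF.exists_block i hci
  exact hi (hVS hiV)

/-- `b + ∑ k ∈ univ \ {i}, c k` is the outcome once `i` contributes `b` instead of `c i`. -/
theorem le_of_nonContentious (hF : FundsCoalition g e c S) {i : ι} {b : Multiset Res}
    (hi : g i ≤ b + ∑ k ∈ univ \ {i}, c k)
    (hO : ∑ m ∈ satisfied g (b + ∑ k ∈ univ \ {i}, c k), g m ≤
      b + ∑ k ∈ univ \ {i}, c k) :
    c i ≤ b := by
  set σ := ∑ k ∈ univ \ {i}, c k
  by_cases hci : c i = 0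
  · simp [hci]
  obtain ⟨V, hVS, hiV, hciV, hSV⟩ := hF.exists_block i hci
  have hsplit : c i + σ = ∑ m ∈ S, g m :=
    (sum_eq_add_sum_sdiff_singleton_of_mem (mem_univ i) c).symm.trans hF.sum_eq
  have hσ : σ = ∑ m ∈ S \ V, g m := by
    rw [← sum_sdiff hVS, ← hciV, add_comm] at hsplit
    exact add_right_cancel hsplit
  have hST : S ⊆ satisfied g (b + σ) := by
    refine hSV.trans (goalClosure_subset (isGoalClosed_satisfied hO) ?_)
    refine insert_subset (mem_satisfied.mpr hi) fun m hm => mem_satisfied.mpr ?_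
    calc g m ≤ σ := hσ ▸ single_le_sum (fun _ _ => zero_le) hm
      _ ≤ b + σ := le_add_self
  have : c i + σ ≤ b + σ :=
    calc c i + σ = ∑ m ∈ S, g m := hsplit
      _ ≤ ∑ m ∈ satisfied g (b + σ), g m := sum_le_sum_of_subset hST
      _ ≤ b + σ := hO
  exact le_of_add_le_add_right this

theorem exists_ssuperset (hF : FundsCoalition g e c S) {i : ι} (hiS : i ∉ S)
    {b : Multiset Res} (hb : b ≤ e i) (hi : g i ≤ b + ∑ m ∈ S, g m)
    (hO : ∑ m ∈ satisfied g (b + ∑ m ∈ S, g m), g m ≤ b + ∑ m ∈ S, g m) :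
    ∃ S' c', FundsCoalition g e c' S' ∧ S ⊂ S' := by
  set T := satisfied g (b + ∑ m ∈ S, g m)
  set S' := goalClosure g (insert i S)
  have hiS' : i ∈ S' := subset_goalClosure _ (mem_insert_self i S)
  have hSS' : S ⊆ S' := (subset_insert i S).trans (subset_goalClosure _)
  have hS'T : S' ⊆ T := by
    refine goalClosure_subset (isGoalClosed_satisfied hO) (insert_subset (mem_satisfied.mpr hi) ?_)
    exact fun m hm =>
      mem_satisfied.mpr ((single_le_sum (fun _ _ => zero_le) hm).trans le_add_self)
  have hpay : ∑ m ∈ S' \ S, g m ≤ b := by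
    refine le_of_add_le_add_right (a := ∑ m ∈ S, g m) ?_
    calc ∑ m ∈ S' \ S, g m + ∑ m ∈ S, g m = ∑ m ∈ S', g m := sum_sdiff hSS'
      _ ≤ ∑ m ∈ T, g m := sum_le_sum_of_subset hS'T
      _ ≤ b + ∑ m ∈ S, g m := hO
  have hci : c i = 0 := hF.eq_zero_of_notMem hiS
  refine ⟨S', Function.update c i (∑ m ∈ S' \ S, g m),
    ⟨isGoalClosed_goalClosure _, ?_, ?_, ?_⟩,
    ssubset_of_subset_of_ne hSS' fun h => hiS (h ▸ hiS')⟩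
  · intro k
    rcases eq_or_ne k i with rfl | hk
    · simpa using hpay.trans hb
    · simpa [hk] using hF.le_endow k
  · rw [sum_update_of_mem (mem_univ i), ← sum_sdiff hSS', add_right_inj, ← hF.sum_eq,
      sum_eq_add_sum_sdiff_singleton_of_mem (mem_univ i) c, hci, zero_add]
  · intro k hk
    rcases eq_or_ne k i with rfl | hki
    · refine ⟨S' \ S, sdiff_subset, mem_sdiff.mpr ⟨hiS', hiS⟩, by simp, ?_⟩
      rw [Finset.sdiff_sdiff_eq_self hSS']
    · rw [Function.update_of_ne hki] at hk ⊢
      obtain ⟨V, hVS, hkV, hckV, hSV⟩ := hF.exists_block k hk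
      refine ⟨V, hVS.trans hSS', hkV, hckV, ?_⟩
      have hmono : insert k (S \ V) ⊆ insert k (S' \ V) :=
        insert_subset_insert k (sdiff_subset_sdiff hSS' subset_rfl)
      have hiS'V : i ∈ S' \ V := mem_sdiff.mpr ⟨hiS', fun hiV => hiS (hVS hiV)⟩
      refine goalClosure_subset (isGoalClosed_goalClosure _) (insert_subset ?_ ?_)
      · exact subset_goalClosure _ (mem_insert_of_mem hiS'V)
      · exact hSV.trans (goalClosure_mono hmono)

end FundsCoalition

noncomputable def atomProfile (c : ι → Multiset Res) : Profile Res ι :=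
  fun i => (c i).map ({·})

theorem sum_out (P : Profile Res ι) : (out P).sum = ∑ i, (P i).sum :=
  map_sum Multiset.sumAddMonoidHom P univ

theorem sum_out_atomProfile (c : ι → Multiset Res) : (out (atomProfile c)).sum = ∑ i, c i := by
  simp only [sum_out, atomProfile, Multiset.sum_map_singleton]

theorem sum_out_update (P : Profile Res ι) (i : ι) (C : Multiset (Multiset Res)) :
    (out (Function.update P i C)).sum = C.sum + ∑ k ∈ univ \ {i}, (P k).sum := by
  rw [sum_out, ← sum_update_of_mem (mem_univ i)]
  exact sum_congr rfl fun k _ => Function.apply_update (fun _ => Multiset.sum) P i C k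

theorem good_ca_iff (G : RCG Res ι) (P : Profile Res ι) (i : ι) :
    Good .ca G P i ↔
      G.goal i ≤ (out P).sum ∧
        ∑ m ∈ satisfied G.goal (out P).sum, G.goal m ≤ (out P).sum := by
  have : psatPlayers G P = satisfied G.goal (out P).sum := by
    ext m
    rw [mem_satisfied, psatPlayers, mem_filter]
    exact and_iff_right (mem_univ m)
  simp only [Good, Contentious, Psat, Trans, not_not, this]

theorem FundsCoalition.isNashEquilibrium_atomProfile {G : RCG Res ι} (hG : IsRCGBAR G)
    {c : ι → Multiset Res} {S : Finset ι}
    (hF : FundsCoalition G.goal (fun i => (G.endow i).sum) c S)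
    (hmax : ∀ S' c', FundsCoalition G.goal (fun i => (G.endow i).sum) c' S' → ¬ S ⊂ S') :
    NE .ca G (atomProfile c) := by
  set P := atomProfile c
  have hO : (out P).sum = ∑ m ∈ S, G.goal m := (sum_out_atomProfile c).trans hF.sum_eq
  have hgood : ∀ m, Good .ca G P m ↔ G.goal m ≤ ∑ m ∈ S, G.goal m := fun m => by
    rw [good_ca_iff, hO]
    exact and_iff_left hF.isGoalClosed.sum_satisfied_le
  have hnotMem : ∀ {m}, ¬ Good .ca G P m → m ∉ S := fun hm hmS =>
    hm ((hgood _).mpr (single_le_sum (fun _ _ => zero_le) hmS))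
  refine ⟨fun i => ?_, ?_⟩
  · rw [Multiset.eq_map_singleton_sum_of_forall_eq_singleton (hG i)]
    exact Multiset.map_le_map (hF.le_endow i)
  rintro i C ⟨hC, hpref⟩
  have hQ : (out (Function.update P i C)).sum = C.sum + ∑ k ∈ univ \ {i}, c k := by
    simp only [sum_out_update, P, atomProfile, Multiset.sum_map_singleton]
  rcases hpref with ⟨-, hPi, hlt⟩ | ⟨hQi, hPi⟩ | ⟨hQi, -, hlt⟩
  · simp [P, atomProfile, hF.eq_zero_of_notMem (hnotMem hPi)] at hlt
  · have hrest : ∑ k ∈ univ \ {i}, c k = ∑ m ∈ S, G.goal m := by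
      rw [← hF.sum_eq, sum_eq_add_sum_sdiff_singleton_of_mem (mem_univ i) c,
        hF.eq_zero_of_notMem (hnotMem hPi), zero_add]
    have hCe : C.sum ≤ (G.endow i).sum := by
      obtain ⟨D, hD⟩ := exists_add_of_le hC
      simp [hD]
    rw [good_ca_iff, hQ, hrest] at hQi
    obtain ⟨S', c', hF', hSS'⟩ := hF.exists_ssuperset (hnotMem hPi) hCe hQi.1 hQi.2
    exact hmax S' c' hF' hSS'
  · rw [good_ca_iff, hQ] at hQi
    have hle : c i ≤ C.sum := hF.le_of_nonContentious hQi.1 hQi.2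
    have hCatoms : Multiset.card C.sum = Multiset.card C :=
      Multiset.card_sum_of_forall_eq_singleton fun B hB => hG i B (Multiset.mem_of_le hC hB)
    rw [Function.update_self] at hlt
    have hcard_lt := Multiset.card_lt_card hlt
    have hcard_le := Multiset.card_le_card hle
    simp only [P, atomProfile, Multiset.card_map] at hcard_lt
    omega

end RCG

/-- every RCGBAR admits a pure Nash equilibrium under public
contention-averse preferences. -/
theorem RCGBAR_NE_ca_nonempty {Res ι : Type*} [Fintype ι]
    (G : RCG Res ι) (hbar : RCG.IsRCGBAR G) :
    ∃ P : RCG.Profile Res ι, RCG.NE .ca G P := by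
  obtain ⟨S, hS⟩ := exists_maximal_of_wellFoundedGT
    (fun S => ∃ c, RCG.FundsCoalition G.goal (fun i => (G.endow i).sum) c S) ⟨∅, 0, .empty⟩
  obtain ⟨c, hc⟩ := hS.prop
  exact ⟨_, hc.isNashEquilibrium_atomProfile hbar fun S' c' hc' => hS.not_gt ⟨c', hc'⟩⟩
end

section
/- Some RCGBARs admit no pure Nash equilibrium under private contention-averse preferences. Concretely, for distinct atomic resources A and B, the four-player RCGBAR with ε_1 = ∅, ε_2 = ∅, ε_3 = {B, B}, ε_4 = {A, A}, γ_1 = A·A·B·B, γ_2 = A·B, γ_3 = B, γ_4 = A satisfies NE^pca(G) = ∅. -/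
open scoped Classical

/-!
Players `0` and `1` own nothing, so a feasible profile only records the numbers `a, b ≤ 2` of
units of `A` and `B` offered by the suppliers `3` and `2` (the paper's players 4 and 3). Every
potentially satisfied consumer claims the supplier's resource as well, and counting this demand
against the supply shows that a supplier is satisfied without contention exactly when it offers
strictly more units than its rival. A supplier facing `x` units therefore best responds with
`(x + 1) % 3`: outbid by one when possible, offer nothing otherwise. This map is a 3-cycle on
`{0, 1, 2}`, so the two suppliers are never best-responding at the same time.
-/

theorem Multiset.le_iff_count_le_and_count_le {α : Type*} [DecidableEq α] {s t : Multiset α}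
    {a b : α} (hs : ∀ x ∈ s, x = a ∨ x = b) :
    s ≤ t ↔ count a s ≤ count a t ∧ count b s ≤ count b t := by
  refine ⟨fun h => ⟨Multiset.count_le_of_le a h, Multiset.count_le_of_le b h⟩, ?_⟩
  rintro ⟨ha, hb⟩
  refine Multiset.le_iff_count.mpr fun x => ?_
  by_cases hx : x ∈ s
  · rcases hs x hx with rfl | rfl <;> assumption
  · simp [Multiset.count_eq_zero.mpr hx]

theorem Multiset.replicate_lt_replicate {α : Type*} (a : α) {k n : ℕ} :
    replicate k a < replicate n a ↔ k < n := by
  simp only [lt_iff_le_not_ge, Multiset.replicate_le_replicate]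

namespace RCG

variable {Res ι : Type*} [Fintype ι]

theorem good_pca_iff_forall_count (G : RCG Res ι) (P : Profile Res ι) (i : ι) :
    Good .pca G P i ↔ Psat G P i ∧
      ∀ r ∈ G.goal i, ∑ j ∈ psatPlayers G P, (G.goal j).count r ≤ (out P).sum.count r := by
  have hrestr : ∀ r, (∑ j ∈ psatPlayers G P, restr (G.goal j) (G.goal i)).count r
      = if r ∈ G.goal i then ∑ j ∈ psatPlayers G P, (G.goal j).count r else 0 := by
    intro r
    simp only [Multiset.count_sum', restr, Multiset.count_filter]
    split_ifs <;> simp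
  simp only [Good, ContentiousFor, Trans, Multiset.le_iff_count, hrestr]
  refine and_congr_right fun hsat => ?_
  simp only [hsat, true_and, not_not]
  exact forall_congr' fun r => by split_ifs with hr <;> simp [hr]

/-- A supplier facing a rival who offers `x` units, and satisfied without contention exactly when
it offers more, strictly prefers offering `y'` to offering `y` (the shape of `Prefers .pca`). -/
def OutbidImproves (x y y' : ℕ) : Prop :=
  (¬ x < y' ∧ ¬ x < y ∧ y' < y) ∨ (x < y' ∧ ¬ x < y) ∨ (x < y' ∧ x < y ∧ y' < y)

theorem outbidImproves_succ_mod_three {x y : ℕ} (hx : x ≤ 2) (hy : y ≤ 2)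
    (h : y ≠ (x + 1) % 3) : OutbidImproves x y ((x + 1) % 3) := by
  unfold OutbidImproves
  omega

section SupplyGame

def supplyGame (A B : Res) : RCG Res (Fin 4) where
  goal := ![({A, A, B, B} : Multiset Res), ({A, B} : Multiset Res),
            ({B} : Multiset Res), ({A} : Multiset Res)]
  endow := ![(0 : Multiset (Multiset Res)),
             (0 : Multiset (Multiset Res)),
             ({({B} : Multiset Res), ({B} : Multiset Res)} : Multiset (Multiset Res)),
             ({({A} : Multiset Res), ({A} : Multiset Res)} : Multiset (Multiset Res))]

def supplyProfile (A B : Res) (a b : ℕ) : Profile Res (Fin 4) :=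
  ![0, 0, Multiset.replicate b {B}, Multiset.replicate a {A}]

theorem supplyProfile_apply_two (A B : Res) (a b : ℕ) :
    supplyProfile A B a b 2 = Multiset.replicate b {B} := rfl

theorem supplyProfile_apply_three (A B : Res) (a b : ℕ) :
    supplyProfile A B a b 3 = Multiset.replicate a {A} := rfl

theorem supplyProfile_out_sum (A B : Res) (a b : ℕ) :
    (out (supplyProfile A B a b)).sum = Multiset.replicate a A + Multiset.replicate b B := by
  simp [out, supplyProfile, Fin.sum_univ_four, Multiset.sum_replicate, Multiset.nsmul_singleton,
    add_comm]

theorem supplyGame_endow_two (A B : Res) :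
    (supplyGame A B).endow 2 = Multiset.replicate 2 {B} := rfl

theorem supplyGame_endow_three (A B : Res) :
    (supplyGame A B).endow 3 = Multiset.replicate 2 {A} := rfl

theorem eq_supplyProfile_of_le_endow {A B : Res} {P : Profile Res (Fin 4)}
    (hP : ∀ i, P i ≤ (supplyGame A B).endow i) :
    ∃ a ≤ 2, ∃ b ≤ 2, P = supplyProfile A B a b := by
  have h0 : P 0 = 0 := by simpa [supplyGame] using hP 0
  have h1 : P 1 = 0 := by simpa [supplyGame] using hP 1
  obtain ⟨b, hb, h2⟩ := Multiset.le_replicate_iff.mp (supplyGame_endow_two A B ▸ hP 2)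
  obtain ⟨a, ha, h3⟩ := Multiset.le_replicate_iff.mp (supplyGame_endow_three A B ▸ hP 3)
  refine ⟨a, ha, b, hb, funext fun j => ?_⟩
  fin_cases j <;> simp [supplyProfile, h0, h1, h2, h3]

theorem replicate_le_supplyGame_endow_two (A B : Res) {k : ℕ} (hk : k ≤ 2) :
    Multiset.replicate k {B} ≤ (supplyGame A B).endow 2 :=
  supplyGame_endow_two A B ▸ Multiset.replicate_mono _ hk

theorem replicate_le_supplyGame_endow_three (A B : Res) {k : ℕ} (hk : k ≤ 2) :
    Multiset.replicate k {A} ≤ (supplyGame A B).endow 3 :=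
  supplyGame_endow_three A B ▸ Multiset.replicate_mono _ hk

-- Stated for every `DecidableEq` instance because `ProfDev` updates with the classical one.
theorem update_supplyProfile_two [DecidableEq (Fin 4)] (A B : Res) (a b b' : ℕ) :
    Function.update (supplyProfile A B a b) 2 (Multiset.replicate b' {B}) =
      supplyProfile A B a b' := by
  refine Function.update_eq_iff.mpr ⟨rfl, fun j hj => ?_⟩
  fin_cases j <;> simp_all [supplyProfile]

theorem update_supplyProfile_three [DecidableEq (Fin 4)] (A B : Res) (a b a' : ℕ) :
    Function.update (supplyProfile A B a b) 3 (Multiset.replicate a' {A}) =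
      supplyProfile A B a' b := by
  refine Function.update_eq_iff.mpr ⟨rfl, fun j hj => ?_⟩
  fin_cases j <;> simp_all [supplyProfile]

theorem count_supplyGame_goal_left {A B : Res} (hAB : A ≠ B) (j : Fin 4) :
    ((supplyGame A B).goal j).count A = ![2, 1, 0, 1] j := by
  fin_cases j <;> simp [supplyGame, hAB]

theorem count_supplyGame_goal_right {A B : Res} (hAB : A ≠ B) (j : Fin 4) :
    ((supplyGame A B).goal j).count B = ![2, 1, 1, 0] j := by
  fin_cases j <;> simp [supplyGame, hAB, hAB.symm]

theorem count_supplyProfile_out_sum_left {A B : Res} (hAB : A ≠ B) (a b : ℕ) :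
    (out (supplyProfile A B a b)).sum.count A = a := by
  simp [supplyProfile_out_sum, Multiset.count_replicate, hAB.symm]

theorem count_supplyProfile_out_sum_right {A B : Res} (hAB : A ≠ B) (a b : ℕ) :
    (out (supplyProfile A B a b)).sum.count B = b := by
  simp [supplyProfile_out_sum, Multiset.count_replicate, hAB]

theorem psat_supplyProfile_iff {A B : Res} (hAB : A ≠ B) (a b : ℕ) (j : Fin 4) :
    Psat (supplyGame A B) (supplyProfile A B a b) j ↔
      ![2, 1, 0, 1] j ≤ a ∧ ![2, 1, 1, 0] j ≤ b := by
  rw [Psat, Trans, Multiset.le_iff_count_le_and_count_le (a := A) (b := B),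
    count_supplyGame_goal_left hAB, count_supplyGame_goal_right hAB,
    count_supplyProfile_out_sum_left hAB, count_supplyProfile_out_sum_right hAB]
  fin_cases j <;> simp [supplyGame]

theorem sum_psatPlayers_supplyProfile {M : Type*} [AddCommMonoid M] {A B : Res} (hAB : A ≠ B)
    (a b : ℕ) (f : Fin 4 → M) :
    ∑ j ∈ psatPlayers (supplyGame A B) (supplyProfile A B a b), f j =
      (if 2 ≤ a ∧ 2 ≤ b then f 0 else 0) + (if 1 ≤ a ∧ 1 ≤ b then f 1 else 0) +
        (if 1 ≤ b then f 2 else 0) + (if 1 ≤ a then f 3 else 0) := by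
  simp only [psatPlayers, Finset.sum_filter, Fin.sum_univ_four, psat_supplyProfile_iff hAB]
  congr <;> simp

theorem good_supplyProfile_two_iff {A B : Res} (hAB : A ≠ B) (a : ℕ) {b : ℕ} (hb : b ≤ 2) :
    Good .pca (supplyGame A B) (supplyProfile A B a b) 2 ↔ a < b := by
  rw [good_pca_iff_forall_count, psat_supplyProfile_iff hAB,
    show (supplyGame A B).goal 2 = {B} from rfl]
  simp only [Multiset.mem_singleton, forall_eq, sum_psatPlayers_supplyProfile hAB,
    count_supplyGame_goal_right hAB, count_supplyProfile_out_sum_right hAB, Matrix.cons_val]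
  split_ifs <;> omega

theorem good_supplyProfile_three_iff {A B : Res} (hAB : A ≠ B) {a : ℕ} (ha : a ≤ 2) (b : ℕ) :
    Good .pca (supplyGame A B) (supplyProfile A B a b) 3 ↔ b < a := by
  rw [good_pca_iff_forall_count, psat_supplyProfile_iff hAB,
    show (supplyGame A B).goal 3 = {A} from rfl]
  simp only [Multiset.mem_singleton, forall_eq, sum_psatPlayers_supplyProfile hAB,
    count_supplyGame_goal_left hAB, count_supplyProfile_out_sum_left hAB, Matrix.cons_val]
  split_ifs <;> omega

theorem profDev_supplyProfile_two {A B : Res} (hAB : A ≠ B) {a b : ℕ} (ha : a ≤ 2)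
    (hb : b ≤ 2) (h : b ≠ (a + 1) % 3) :
    ProfDev .pca (supplyGame A B) (supplyProfile A B a b) 2
      (Multiset.replicate ((a + 1) % 3) {B}) := by
  refine ⟨replicate_le_supplyGame_endow_two A B (by omega), ?_⟩
  have hgood := good_supplyProfile_two_iff hAB a (b := (a + 1) % 3) (by omega)
  rw [@update_supplyProfile_two _ (_) A B a b, Prefers, hgood, good_supplyProfile_two_iff hAB a hb]
  rw [supplyProfile_apply_two, supplyProfile_apply_two, Multiset.replicate_lt_replicate]
  exact outbidImproves_succ_mod_three ha hb h

theorem profDev_supplyProfile_three {A B : Res} (hAB : A ≠ B) {a b : ℕ} (ha : a ≤ 2)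
    (hb : b ≤ 2) (h : a ≠ (b + 1) % 3) :
    ProfDev .pca (supplyGame A B) (supplyProfile A B a b) 3
      (Multiset.replicate ((b + 1) % 3) {A}) := by
  refine ⟨replicate_le_supplyGame_endow_three A B (by omega), ?_⟩
  have hgood := good_supplyProfile_three_iff hAB (a := (b + 1) % 3) (by omega) b
  rw [@update_supplyProfile_three _ (_) A B a b, Prefers, hgood, good_supplyProfile_three_iff hAB ha]
  rw [supplyProfile_apply_three, supplyProfile_apply_three, Multiset.replicate_lt_replicate]
  exact outbidImproves_succ_mod_three hb ha h

end SupplyGame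

end RCG

/-- the four-player RCGBAR with `ε₁ = ε₂ = ∅`, `ε₃ = {B,B}`,
`ε₄ = {A,A}`, `γ₁ = A·A·B·B`, `γ₂ = A·B`, `γ₃ = B`, `γ₄ = A` has no pure Nash
equilibrium under private contention-averse preferences. -/
theorem RCGBAR_no_NE_pca {Res : Type*} (A B : Res) (hAB : A ≠ B)
    (G : RCG Res (Fin 4))
    (hgoal : G.goal = ![({A, A, B, B} : Multiset Res), ({A, B} : Multiset Res),
                        ({B} : Multiset Res), ({A} : Multiset Res)])
    (hendow : G.endow = ![(0 : Multiset (Multiset Res)),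
                          (0 : Multiset (Multiset Res)),
                          ({({B} : Multiset Res), ({B} : Multiset Res)} :
                            Multiset (Multiset Res)),
                          ({({A} : Multiset Res), ({A} : Multiset Res)} :
                            Multiset (Multiset Res))]) :
    ∀ P : RCG.Profile Res (Fin 4), ¬ RCG.NE .pca G P := by
  obtain rfl : G = RCG.supplyGame A B := by
    cases G
    simp only at hgoal hendow
    subst hgoal hendow
    rfl
  rintro P ⟨hfeas, hdev⟩
  obtain ⟨a, ha, b, hb, rfl⟩ := RCG.eq_supplyProfile_of_le_endow hfeas
  by_cases h : b = (a + 1) % 3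
  · exact hdev 3 _ (RCG.profDev_supplyProfile_three hAB ha hb (by omega))
  · exact hdev 2 _ (RCG.profDev_supplyProfile_two hAB ha hb h)
end

section
/- The cardinality-based preference is represented by the utility function u: for every resource contribution game G, every kind of preferences pref ∈ {ct, ca, pca}, every player i and all profiles P, Q: Q ≺'^pref_i P if and only if u^pref_i(P) > u^pref_i(Q), where ≺'^pref_i is the cardinality-based strict preference and u^pref_i(P) = 2·|ε_i| + 1 − |P_i| when P ∈ good^pref(G,i), and u^pref_i(P) = |ε_i| − |P_i| otherwise. -/
open scoped Classical

namespace RCG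

variable {Res ι : Type*} [Fintype ι]

/-- Cardinality-based strict preference: `Q ≺'^pref_i P`. -/
def PrefersCard (pref : Pref) (G : RCG Res ι) (i : ι) (Q P : Profile Res ι) : Prop :=
  (¬ Good pref G P i ∧ ¬ Good pref G Q i ∧
    Multiset.card (P i) < Multiset.card (Q i)) ∨
  (Good pref G P i ∧ ¬ Good pref G Q i) ∨
  (Good pref G P i ∧ Good pref G Q i ∧
    Multiset.card (P i) < Multiset.card (Q i))

/-- The utility function `u^pref_i`. -/
noncomputable def utility (pref : Pref) (G : RCG Res ι) (i : ι)
    (P : Profile Res ι) : ℤ :=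
  if Good pref G P i then
    2 * (Multiset.card (G.endow i) : ℤ) + 1 - (Multiset.card (P i) : ℤ)
  else (Multiset.card (G.endow i) : ℤ) - (Multiset.card (P i) : ℤ)

end RCG

namespace RCG

variable {Res ι : Type*} [Fintype ι] {pref : Pref} {G : RCG Res ι} {i : ι}
  {P Q : Profile Res ι}

theorem prefersCard_iff_card_lt_of_good_iff (h : Good pref G P i ↔ Good pref G Q i) :
    PrefersCard pref G i Q P ↔ Multiset.card (P i) < Multiset.card (Q i) := by
  unfold PrefersCard
  by_cases hP : Good pref G P i <;> simp [hP, ← h]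

theorem prefersCard_of_good_of_not_good (hP : Good pref G P i) (hQ : ¬ Good pref G Q i) :
    PrefersCard pref G i Q P :=
  Or.inr (Or.inl ⟨hP, hQ⟩)

theorem not_prefersCard_of_not_good_of_good (hP : ¬ Good pref G P i)
    (hQ : Good pref G Q i) : ¬ PrefersCard pref G i Q P := by
  unfold PrefersCard
  tauto

theorem utility_lt_utility_iff_of_good_iff (h : Good pref G P i ↔ Good pref G Q i) :
    utility pref G i Q < utility pref G i P ↔ Multiset.card (P i) < Multiset.card (Q i) := by
  unfold utility
  by_cases hP : Good pref G P i <;> simp [hP, ← h]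

/-- Good profiles have utility above `|ε_i|` and bad ones at most `|ε_i|`, as long as the
contribution is part of the endowment. -/
theorem utility_lt_utility_of_not_good_of_good (hQ : ¬ Good pref G Q i)
    (hP : Good pref G P i) (hPε : P i ≤ G.endow i) :
    utility pref G i Q < utility pref G i P := by
  have hcard := Multiset.card_le_card hPε
  simp only [utility, hP, hQ, if_true, if_false]
  omega

end RCG

/-- the cardinality-based preference is represented by the utility
function `u^pref_i`. -/
theorem prefersCard_iff_utility_gt {Res ι : Type*} [Fintype ι]
    (pref : RCG.Pref) (G : RCG Res ι) (i : ι) (P Q : RCG.Profile Res ι)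
    (hP : ∀ j, P j ≤ G.endow j) (hQ : ∀ j, Q j ≤ G.endow j) :
    RCG.PrefersCard pref G i Q P ↔
      RCG.utility pref G i P > RCG.utility pref G i Q := by
  rw [gt_iff_lt]
  by_cases h : RCG.Good pref G P i ↔ RCG.Good pref G Q i
  · rw [RCG.prefersCard_iff_card_lt_of_good_iff h, RCG.utility_lt_utility_iff_of_good_iff h]
  by_cases hgP : RCG.Good pref G P i
  · have hgQ : ¬ RCG.Good pref G Q i := fun hgQ => h (iff_of_true hgP hgQ)
    exact iff_of_true (RCG.prefersCard_of_good_of_not_good hgP hgQ)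
      (RCG.utility_lt_utility_of_not_good_of_good hgQ hgP (hP i))
  · have hgQ : RCG.Good pref G Q i := by tauto
    exact iff_of_false (RCG.not_prefersCard_of_not_good_of_good hgP hgQ)
      (RCG.utility_lt_utility_of_not_good_of_good hgP hgQ (hQ i)).not_gt
end
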